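/- arXiv:2009.10207 — 3 statements merged into one kernel-verified Lean document; each statement's English description precedes it below -/
import Mathlib

section
/- Let X be a type, n : X → X a function, and nil, c₁, c₂ elements of X, with the monotone set operators F, F₁, F₂ on subsets of X defined by F(S) = {x | x = nil ∨ n(x) ∈ S}, F₁(S) = {x | x = nil ∨ (n(x) ∈ S ∧ (c₁ = c₂ → x ≠ c₁))}, F₂(S) = {x | x = nil ∨ (n(x) ∈ S ∧ (c₁ ≠ c₂ → x ≠ c₁))}. Then lfp F ⊆ lfp F₁ ∪ lfp F₂. (The paper's example claim that the sentence α = ∀x. list(x) → (list₁(x) ∨ list₂(x)) is valid under least-fixpoint semantics.) -/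
/-!
Whether or not `c₁ = c₂`, the side condition in one of `F₁`, `F₂` is vacuous, so that operator
coincides with `F` and its least fixed point is `lfp F` itself.
-/

/-- The operator `F` whose least fixed point interprets `list`. -/
def listF {X : Type*} (n : X → X) (nil : X) : Set X →o Set X :=
  ⟨fun S => {x | x = nil ∨ n x ∈ S}, by
    intro S T hST x hx
    rcases hx with h | h
    · exact Or.inl h
    · exact Or.inr (hST h)⟩

/-- The operator `F₁` whose least fixed point interprets `list₁`. -/
def listF₁ {X : Type*} (n : X → X) (nil c₁ c₂ : X) : Set X →o Set X :=
  ⟨fun S => {x | x = nil ∨ (n x ∈ S ∧ (c₁ = c₂ → x ≠ c₁))}, by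
    intro S T hST x hx
    rcases hx with h | ⟨h1, h2⟩
    · exact Or.inl h
    · exact Or.inr ⟨hST h1, h2⟩⟩

/-- The operator `F₂` whose least fixed point interprets `list₂`. -/
def listF₂ {X : Type*} (n : X → X) (nil c₁ c₂ : X) : Set X →o Set X :=
  ⟨fun S => {x | x = nil ∨ (n x ∈ S ∧ (c₁ ≠ c₂ → x ≠ c₁))}, by
    intro S T hST x hx
    rcases hx with h | ⟨h1, h2⟩
    · exact Or.inl h
    · exact Or.inr ⟨hST h1, h2⟩⟩

section

variable {X : Type*} (n : X → X) (nil : X) {c₁ c₂ : X}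

theorem listF₁_eq_listF_of_ne (h : c₁ ≠ c₂) : listF₁ n nil c₁ c₂ = listF n nil := by
  ext S x
  exact or_congr_right (and_iff_left fun heq => absurd heq h)

theorem listF₂_eq_listF_of_eq (h : c₁ = c₂) : listF₂ n nil c₁ c₂ = listF n nil := by
  ext S x
  exact or_congr_right (and_iff_left fun hne => absurd h hne)

end

/-- The sentence `α = ∀x. list(x) → (list₁(x) ∨ list₂(x))` is valid
under least-fixpoint semantics: `lfp F ⊆ lfp F₁ ∪ lfp F₂`. -/
theorem lfp_list_subset_union {X : Type*} (n : X → X) (nil c₁ c₂ : X) :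
    OrderHom.lfp (listF n nil) ⊆
      OrderHom.lfp (listF₁ n nil c₁ c₂) ∪ OrderHom.lfp (listF₂ n nil c₁ c₂) := by
  by_cases h : c₁ = c₂
  · rw [listF₂_eq_listF_of_eq n nil h]
    exact Set.subset_union_right
  · rw [listF₁_eq_listF_of_ne n nil h]
    exact Set.subset_union_left
end

section
/- Let X be a type, n : X → X a function, and nil, c₁, c₂ elements of X, with the monotone set operators F, F₁, F₂ on subsets of X defined by F(S) = {x | x = nil ∨ n(x) ∈ S}, F₁(S) = {x | x = nil ∨ (n(x) ∈ S ∧ (c₁ = c₂ → x ≠ c₁))}, F₂(S) = {x | x = nil ∨ (n(x) ∈ S ∧ (c₁ ≠ c₂ → x ≠ c₁))}. Let S, S₁, S₂ be subsets of X such that S₁ is a fixed point of F₁ (F₁(S₁) = S₁) and S₂ is a fixed point of F₂ (F₂(S₂) = S₂). If (F(S ∩ S₁) ⊆ S₁ implies S ⊆ S₁) and (F(S ∩ S₂) ⊆ S₂ implies S ⊆ S₂), then S ⊆ S₁ ∪ S₂. (The paper's example claim that the induction principles IP(L₁) and IP(L₂) together entail α under fixpoint (first-order) semantics, because in each interpretation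 either PFP(L₁) or PFP(L₂) is satisfied.) -/
/-!
Whichever way `c₁ = c₂` is decided, one of `F₁`, `F₂` coincides with `F`. A fixed point `Sᵢ` of
that operator is then a pre-fixpoint of `F`, so by monotonicity `F (S ∩ Sᵢ) ⊆ F Sᵢ ⊆ Sᵢ`: the
premise `PFP(Lᵢ)` of the induction principle holds, and `IP(Lᵢ)` gives `S ⊆ Sᵢ`.
-/

theorem le_of_induction_of_map_le {α : Type*} [SemilatticeInf α] (f : α →o α) {S T : α}
    (hT : f T ≤ T) (ip : f (S ⊓ T) ≤ T → S ≤ T) : S ≤ T :=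
  ip ((f.mono inf_le_right).trans hT)

section

variable {X : Type*} (n : X → X) (nil : X) {c₁ c₂ : X}

theorem listF₁_eq_listF (hc : c₁ ≠ c₂) : listF₁ n nil c₁ c₂ = listF n nil := by
  ext S x
  exact or_congr_right (and_iff_left (absurd · hc))

theorem listF₂_eq_listF (hc : c₁ = c₂) : listF₂ n nil c₁ c₂ = listF n nil := by
  ext S x
  exact or_congr_right (and_iff_left (absurd hc ·))

end

/-- Under fixpoint (first-order) semantics, the induction principles
`IP(L₁)` and `IP(L₂)` together entail `α`: if `S₁, S₂` are fixed points of `F₁, F₂`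
and both induction principles hold for `S`, then `S ⊆ S₁ ∪ S₂`. -/
theorem induction_principles_entail_alpha {X : Type*} (n : X → X) (nil c₁ c₂ : X)
    (S S₁ S₂ : Set X)
    (h₁ : listF₁ n nil c₁ c₂ S₁ = S₁) (h₂ : listF₂ n nil c₁ c₂ S₂ = S₂)
    (ip₁ : listF n nil (S ∩ S₁) ⊆ S₁ → S ⊆ S₁)
    (ip₂ : listF n nil (S ∩ S₂) ⊆ S₂ → S ⊆ S₂) :
    S ⊆ S₁ ∪ S₂ := by
  rcases eq_or_ne c₁ c₂ with hc | hc
  · rw [listF₂_eq_listF n nil hc] at h₂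
    exact (le_of_induction_of_map_le _ h₂.le ip₂).trans Set.subset_union_right
  · rw [listF₁_eq_listF n nil hc] at h₁
    exact (le_of_induction_of_map_le _ h₁.le ip₁).trans Set.subset_union_left
end

section
/- There exist a type X, a function n : X → X, and elements nil, c₁, c₂ of X with c₁ = c₂ such that lfp F is not contained in lfp F₁; and there exist a type X, a function n : X → X, and elements nil, c₁, c₂ of X with c₁ ≠ c₂ such that lfp F is not contained in lfp F₂ (where F, F₁, F₂ are the operators F(S) = {x | x = nil ∨ n(x) ∈ S}, F₁(S) = {x | x = nil ∨ (n(x) ∈ S ∧ (c₁ = c₂ → x ≠ c₁))}, F₂(S) = {x | x = nil ∨ (n(x) ∈ S ∧ (c₁ ≠ c₂ → x ≠ c₁))}). (The paper's example claim that for each of the lemmas L₁ = ∀x. list(x) → list₁(x) and L₂ = ∀x. list(x) → list₂(x) there are least-fixpoint models in which the lemma does not hold.) -/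
section

variable {X : Type*} {n : X → X} {nil c₁ c₂ : X}

theorem nil_mem_lfp_listF : nil ∈ OrderHom.lfp (listF n nil) := by
  rw [← OrderHom.map_lfp]
  exact Or.inl rfl

theorem mem_lfp_listF_of_next_mem {x : X} (hx : n x ∈ OrderHom.lfp (listF n nil)) :
    x ∈ OrderHom.lfp (listF n nil) := by
  rw [← OrderHom.map_lfp]
  exact Or.inr hx

theorem not_mem_lfp_listF₁ (h : c₁ = c₂) (hnil : c₁ ≠ nil) :
    c₁ ∉ OrderHom.lfp (listF₁ n nil c₁ c₂) := by
  rw [← OrderHom.map_lfp]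
  rintro (h_nil | ⟨-, hguard⟩)
  · exact hnil h_nil
  · exact hguard h rfl

theorem not_mem_lfp_listF₂ (h : c₁ ≠ c₂) (hnil : c₁ ≠ nil) :
    c₁ ∉ OrderHom.lfp (listF₂ n nil c₁ c₂) := by
  rw [← OrderHom.map_lfp]
  rintro (h_nil | ⟨-, hguard⟩)
  · exact hnil h_nil
  · exact hguard h rfl

end

/- In both models `X = Bool`, `nil = true`, `n` is constantly `nil` and `c₁ = false`: then `c₁` is a
one-cell list, but not a `list₁` (resp. `list₂`). -/
/-- For each of the lemmas `L₁ = ∀x. list(x) → list₁(x)` and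
`L₂ = ∀x. list(x) → list₂(x)` there are least-fixpoint models in which the lemma
fails: one with `c₁ = c₂` where `lfp F ⊄ lfp F₁`, and one with `c₁ ≠ c₂` where
`lfp F ⊄ lfp F₂`. -/
theorem exists_lfp_models_falsifying_lemmas :
    (∃ (X : Type) (n : X → X) (nil c₁ c₂ : X), c₁ = c₂ ∧
      ¬ OrderHom.lfp (listF n nil) ⊆ OrderHom.lfp (listF₁ n nil c₁ c₂)) ∧
    (∃ (X : Type) (n : X → X) (nil c₁ c₂ : X), c₁ ≠ c₂ ∧
      ¬ OrderHom.lfp (listF n nil) ⊆ OrderHom.lfp (listF₂ n nil c₁ c₂)) := by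
  have hlist : false ∈ OrderHom.lfp (listF (fun _ : Bool => true) true) :=
    mem_lfp_listF_of_next_mem nil_mem_lfp_listF
  exact
    ⟨⟨Bool, fun _ => true, true, false, false, rfl,
        fun hsub => not_mem_lfp_listF₁ rfl Bool.false_ne_true (hsub hlist)⟩,
      ⟨Bool, fun _ => true, true, false, true, Bool.false_ne_true,
        fun hsub => not_mem_lfp_listF₂ Bool.false_ne_true Bool.false_ne_true (hsub hlist)⟩⟩
end
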